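/- arXiv:math/0506525 — 6 statements merged into one kernel-verified Lean document; each statement's English description precedes it below -/
import Mathlib

section
/- Let F be a point-finite cover of a set X. The assignment S sending F in F to the open star st(v(F)) of the corresponding vertex in the nerve N(F) is an invertible carrier: S is a bijection from F onto the collection of open stars, S is a carrier, and the inverse map S^{-1} is also a carrier. -/
open Set Function
open scoped Classical

/-- A point of the geometric realization of the nerve of a cover `F` of `X`. -/
def IsNervePoint {X : Type*} (F : Set (Set X)) (p : Set X → ℝ) : Prop :=
  (Function.support p).Finite ∧ (∀ A, 0 ≤ p A) ∧ Function.support p ⊆ F ∧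
    (∑ᶠ A, p A) = 1 ∧ (⋂₀ Function.support p).Nonempty

/-- The open star of the vertex `v(A)` of the nerve. -/
def openStar {X : Type*} (F : Set (Set X)) (A : Set X) : Set (Set X → ℝ) :=
  {p | IsNervePoint F p ∧ 0 < p A}

lemma delta_mem_openStar {X : Type*} (F : Set (Set X)) {A : Set X} (hA : A ∈ F)
    (hne : A.Nonempty) : (fun B => if B = A then (1:ℝ) else 0) ∈ openStar F A := by
  have hsupp : Function.support (fun B : Set X => if B = A then (1:ℝ) else 0) = {A} := by
    ext B; simp [Function.support]
  refine ⟨⟨?_, ?_, ?_, ?_, ?_⟩, by simp⟩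
  · rw [hsupp]; exact Set.finite_singleton A
  · intro B; positivity
  · rw [hsupp]; simpa using hA
  · rw [finsum_eq_single _ A (fun b hb => by simp [hb])]; simp
  · rw [hsupp]; simpa using hne

/-- For a point-finite cover `F` (with nonempty members), `S : A ↦ st v(A)` is an
invertible carrier: it is a bijection of `F` onto the collection of open stars, it is a
carrier, and its inverse is a carrier. -/
theorem stmt2 {X : Type*} (F : Set (Set X))
    (hcov : ∀ x : X, ∃ A ∈ F, x ∈ A)
    (hpf : ∀ x : X, {A | A ∈ F ∧ x ∈ A}.Finite)
    (hneF : ∀ A ∈ F, A.Nonempty) :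
    Set.BijOn (openStar F) F (openStar F '' F) ∧
    (∀ 𝒜 ⊆ F, 𝒜.Nonempty → (⋂₀ 𝒜).Nonempty → (⋂ A ∈ 𝒜, openStar F A).Nonempty) ∧
    (∀ 𝒜 ⊆ F, 𝒜.Nonempty → (⋂ A ∈ 𝒜, openStar F A).Nonempty → (⋂₀ 𝒜).Nonempty) := by
  refine ⟨⟨fun A hA => Set.mem_image_of_mem _ hA, ?_, fun q hq => hq⟩, ?_, ?_⟩
  · -- injectivity
    intro A hA B hB hAB
    have hp : (fun C => if C = A then (1:ℝ) else 0) ∈ openStar F B := by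
      rw [← hAB]; exact delta_mem_openStar F hA (hneF A hA)
    have := hp.2
    by_contra hne
    simp [Ne.symm hne] at this
  · -- carrier
    intro 𝒜 h𝒜F ⟨A₀, hA₀⟩ ⟨x, hx⟩
    set t := (hpf x).toFinset with ht
    have htmem : ∀ A, A ∈ t ↔ A ∈ F ∧ x ∈ A := by intro A; simp [ht]
    have hcard : 0 < t.card := by
      refine Finset.card_pos.2 ⟨A₀, (htmem A₀).2 ⟨h𝒜F hA₀, hx A₀ hA₀⟩⟩
    set p : Set X → ℝ := fun A => if A ∈ t then ((t.card : ℝ))⁻¹ else 0 with hp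
    have hcpos : (0:ℝ) < ((t.card : ℝ))⁻¹ := by positivity
    have hsupp : Function.support p = ↑t := by
      ext A
      by_cases h : A ∈ t <;> simp [hp, Function.mem_support, h, hcpos.ne']
    have hnp : IsNervePoint F p := by
      refine ⟨?_, ?_, ?_, ?_, ?_⟩
      · rw [hsupp]; exact t.finite_toSet
      · intro A; rw [hp]; positivity
      · rw [hsupp]; intro A hA; exact ((htmem A).1 hA).1
      · rw [finsum_eq_sum_of_support_subset p (by rw [hsupp])]
        have heq : ∑ A ∈ t, p A = ∑ A ∈ t, ((t.card : ℝ))⁻¹ :=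
          Finset.sum_congr rfl fun A hA => by simp [hp, hA]
        rw [heq, Finset.sum_const, nsmul_eq_mul]
        exact mul_inv_cancel₀ (by exact_mod_cast hcard.ne')
      · rw [hsupp]
        exact ⟨x, fun A hA => ((htmem A).1 hA).2⟩
    refine ⟨p, ?_⟩
    simp only [Set.mem_iInter]
    intro A hA
    refine ⟨hnp, ?_⟩
    have : A ∈ t := (htmem A).2 ⟨h𝒜F hA, hx A hA⟩
    simpa [hp, this] using hcpos
  · -- inverse carrier
    intro 𝒜 h𝒜F ⟨A₀, hA₀⟩ ⟨p, hp⟩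
    simp only [Set.mem_iInter] at hp
    obtain ⟨x, hx⟩ := (hp A₀ hA₀).1.2.2.2.2
    exact ⟨x, fun A hA => hx A (hp A hA).2.ne'⟩
end

section
/- Carrier Theorem: Let C : F → G be a carrier where F is a closed, locally finite, locally finite dimensional cover of a space X, and G is a collection of subsets of a space Y such that every nonempty intersection of a subcollection of G is an absolute extensor for X. Then every continuous map f defined on a closed subset A of X with f(F ∩ A) ⊆ C(F) for all F in F extends to a continuous map g : X → Y with g(F) ⊆ C(F) for all F in F. -/
open Set Function

/-- `C` is a carrier on the cover `F`. -/
def IsCarrierOn {X Y : Type*} (F : Set (Set X)) (C : Set X → Set Y) : Prop :=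
  ∀ 𝒜 ⊆ F, 𝒜.Nonempty → (⋂₀ 𝒜).Nonempty → (⋂ A ∈ 𝒜, C A).Nonempty

/-- `E ⊆ Z` is an absolute extensor for the space `W`. -/
def IsAE {Z : Type*} [TopologicalSpace Z] (E : Set Z)
    (W : Type*) [TopologicalSpace W] : Prop :=
  ∀ A : Set W, IsClosed A → ∀ f : W → Z, ContinuousOn f A → MapsTo f A E →
    ∃ g : W → Z, Continuous g ∧ MapsTo g univ E ∧ EqOn g f A

/-- The cover `F` is locally finite dimensional (its nerve is such). -/
def LocFinDim {X : Type*} (F : Set (Set X)) : Prop :=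
  ∀ A ∈ F, ∃ n : ℕ, ∀ B : Set (Set X), B ⊆ F → A ∈ B → (⋂₀ B).Nonempty →
    B.Finite → B.ncard ≤ n

/-! The extension is built simplex by simplex on the nerve of `F`, from the top down. To a
simplex `𝒜` we attach a map `g 𝒜 : X → ⋂ B ∈ 𝒜, C B` which equals `f` on `⋂₀ 𝒜 ∩ A` and
equals `g σ(x)` at every point `x` whose simplex `σ(x) = {B ∈ F | x ∈ B}` strictly contains
`𝒜`. By local finiteness the set where these values are prescribed is closed, and the
prescribed map is continuous on it because on `⋂₀ (insert B 𝒜)` it agrees with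
`g (insert B 𝒜)`; the absolute extensor property of `⋂ B ∈ 𝒜, C B` then provides `g 𝒜`.
Local finite dimensionality makes strict inclusion of simplices well-founded upwards, which
legitimises the recursion. Finally `x ↦ g σ(x) x` agrees with `g {B}` on each `B ∈ F`, so it
is continuous on the locally finite closed cover `F`. -/

namespace Nerve

variable {X : Type*} {F 𝒜 : Set (Set X)} {B : Set X} {x : X}

/-- Finiteness is not required: under `LocFinDim` it follows, see `IsSimplex.finite`. -/
structure IsSimplex (F 𝒜 : Set (Set X)) : Prop where
  nonempty : 𝒜.Nonempty
  subset : 𝒜 ⊆ F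
  sInter_nonempty : (⋂₀ 𝒜).Nonempty

def simplexAt (F : Set (Set X)) (x : X) : Set (Set X) := {B ∈ F | x ∈ B}

theorem mem_sInter_simplexAt : x ∈ ⋂₀ simplexAt F x := fun _ hB => hB.2

theorem subset_simplexAt_iff (h : 𝒜 ⊆ F) : 𝒜 ⊆ simplexAt F x ↔ x ∈ ⋂₀ 𝒜 :=
  ⟨fun hx _ hB => (hx hB).2, fun hx B hB => ⟨h hB, hx B hB⟩⟩

theorem isSimplex_simplexAt_of_ssubset (h : 𝒜 ⊂ simplexAt F x) :
    IsSimplex F (simplexAt F x) :=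
  ⟨nonempty_of_ssubset' h, sep_subset _ _, ⟨x, mem_sInter_simplexAt⟩⟩

theorem isSimplex_simplexAt (hcov : ⋃₀ F = univ) (x : X) : IsSimplex F (simplexAt F x) := by
  obtain ⟨B, hB, hx⟩ : x ∈ ⋃₀ F := hcov ▸ mem_univ x
  exact ⟨⟨B, hB, hx⟩, sep_subset _ _, ⟨x, mem_sInter_simplexAt⟩⟩

theorem isSimplex_insert (h𝒜 : 𝒜 ⊆ F) (hB : B ∈ F) (hne : (⋂₀ insert B 𝒜).Nonempty) :
    IsSimplex F (insert B 𝒜) :=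
  ⟨insert_nonempty _ _, insert_subset hB h𝒜, hne⟩

theorem IsSimplex.finite (hF : LocFinDim F) (h𝒜 : IsSimplex F 𝒜) : 𝒜.Finite := by
  by_contra hinf
  obtain ⟨B, hB⟩ := h𝒜.nonempty
  obtain ⟨n, hn⟩ := hF B (h𝒜.subset hB)
  obtain ⟨t, ht𝒜, htfin, htcard⟩ := Infinite.exists_subset_ncard_eq hinf (n + 1)
  have hle := hn (insert B t) (insert_subset (h𝒜.subset hB) (ht𝒜.trans h𝒜.subset))
    (mem_insert _ _) (h𝒜.sInter_nonempty.mono (sInter_subset_sInter (insert_subset hB ht𝒜)))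
    (htfin.insert B)
  have hge := ncard_le_ncard (subset_insert B t) (htfin.insert B)
  omega

theorem IsSimplex.acc (hF : LocFinDim F) (h𝒜 : IsSimplex F 𝒜) :
    Acc (fun 𝒜' 𝒜 => IsSimplex F 𝒜' ∧ 𝒜 ⊂ 𝒜') 𝒜 := by
  obtain ⟨B, hB⟩ := h𝒜.nonempty
  obtain ⟨n, hn⟩ := hF B (h𝒜.subset hB)
  induction hk : n - 𝒜.ncard using Nat.strong_induction_on generalizing 𝒜 with
  | _ k ih =>
  refine .intro _ fun 𝒜' ⟨h𝒜', hss⟩ => ih _ ?_ h𝒜' (hss.subset hB) rfl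
  have hfin := h𝒜'.finite hF
  have hlt := ncard_lt_ncard hss hfin
  have hle := hn 𝒜' h𝒜'.subset (hss.subset hB) h𝒜'.sInter_nonempty hfin
  omega

theorem wellFounded_ssuperset (hF : LocFinDim F) :
    WellFounded fun 𝒜' 𝒜 : Set (Set X) => IsSimplex F 𝒜' ∧ 𝒜 ⊂ 𝒜' :=
  ⟨fun _ => .intro _ fun _ h => h.1.acc hF⟩

theorem setOf_ssubset_simplexAt (h : 𝒜 ⊆ F) :
    {x | 𝒜 ⊂ simplexAt F x} = ⋃ B : ↥(F \ 𝒜), ⋂₀ insert (B : Set X) 𝒜 := by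
  ext x
  simp only [mem_ofPred_eq, mem_iUnion, sInter_insert, mem_inter_iff, Subtype.exists,
    mem_sdiff, exists_prop]
  constructor
  · intro hss
    obtain ⟨B, hB, hB𝒜⟩ := exists_of_ssubset hss
    exact ⟨B, ⟨hB.1, hB𝒜⟩, hB.2, (subset_simplexAt_iff h).1 hss.subset⟩
  · rintro ⟨B, ⟨hBF, hB𝒜⟩, hxB, hx⟩
    exact (ssubset_iff_of_subset ((subset_simplexAt_iff h).2 hx)).2 ⟨B, ⟨hBF, hxB⟩, hB𝒜⟩

end Nerve

namespace CarrierExtension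

open Nerve

variable {X Y : Type*} [TopologicalSpace X] [TopologicalSpace Y] {F 𝒜 : Set (Set X)}
  {C : Set X → Set Y} {A : Set X} {f : X → Y} {g : Set (Set X) → X → Y}

def extensionDomain (F : Set (Set X)) (A : Set X) (𝒜 : Set (Set X)) : Set X :=
  ⋂₀ 𝒜 ∩ A ∪ {x | 𝒜 ⊂ simplexAt F x}

open Classical in
noncomputable def prescribed (F : Set (Set X)) (f : X → Y) (g : Set (Set X) → X → Y)
    (𝒜 : Set (Set X)) : X → Y :=
  fun x => if 𝒜 ⊂ simplexAt F x then g (simplexAt F x) x else f x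

open Classical in
/-- The recursive call `g` is only available on simplices strictly containing `𝒜`; unfolded,
the condition on `e` reads `EqOn e (prescribed F f (simplexExtension F hF C A f) 𝒜) _`. -/
noncomputable def simplexExtension (F : Set (Set X)) (hF : LocFinDim F) (C : Set X → Set Y)
    (A : Set X) (f : X → Y) : Set (Set X) → X → Y :=
  (wellFounded_ssuperset hF).fix fun 𝒜 g =>
    haveI : Nonempty (X → Y) := ⟨f⟩
    Classical.epsilon fun e => Continuous e ∧ MapsTo e univ (⋂ B ∈ 𝒜, C B) ∧
      EqOn e (fun x => if h : 𝒜 ⊂ simplexAt F x then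
        g _ ⟨isSimplex_simplexAt_of_ssubset h, h⟩ x else f x) (extensionDomain F A 𝒜)

theorem simplexExtension_spec {hF : LocFinDim F}
    (h : ∃ e : X → Y, Continuous e ∧ MapsTo e univ (⋂ B ∈ 𝒜, C B) ∧
      EqOn e (prescribed F f (simplexExtension F hF C A f) 𝒜) (extensionDomain F A 𝒜)) :
    Continuous (simplexExtension F hF C A f 𝒜) ∧
      MapsTo (simplexExtension F hF C A f 𝒜) univ (⋂ B ∈ 𝒜, C B) ∧
      EqOn (simplexExtension F hF C A f 𝒜) (prescribed F f (simplexExtension F hF C A f) 𝒜)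
        (extensionDomain F A 𝒜) := by
  rw [simplexExtension, WellFounded.fix_eq]
  exact Classical.epsilon_spec h

structure IsCoherentExtension (F : Set (Set X)) (C : Set X → Set Y) (A : Set X) (f : X → Y)
    (g : Set (Set X) → X → Y) (𝒜 : Set (Set X)) : Prop where
  continuous : Continuous (g 𝒜)
  mapsTo : MapsTo (g 𝒜) univ (⋂ B ∈ 𝒜, C B)
  eqOn : EqOn (g 𝒜) f (⋂₀ 𝒜 ∩ A)
  eq_simplexAt : ∀ x ∈ ⋂₀ 𝒜, g 𝒜 x = g (simplexAt F x) x

theorem locallyFinite_sInter_insert (hlf : LocallyFinite fun B : F => (B : Set X)) :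
    LocallyFinite fun B : ↥(F \ 𝒜) => ⋂₀ insert (B : Set X) 𝒜 :=
  (hlf.comp_injective (inclusion_injective sdiff_subset)).subset
    fun _ => sInter_subset_of_mem (mem_insert _ _)

theorem isClosed_setOf_ssubset_simplexAt (hclosed : ∀ B ∈ F, IsClosed B)
    (hlf : LocallyFinite fun B : F => (B : Set X)) (h : 𝒜 ⊆ F) :
    IsClosed {x | 𝒜 ⊂ simplexAt F x} := by
  rw [setOf_ssubset_simplexAt h]
  exact (locallyFinite_sInter_insert hlf).isClosed_iUnion fun B =>
    isClosed_sInter fun B' hB' => hclosed B' (insert_subset B.2.1 h hB')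

theorem isClosed_extensionDomain (hclosed : ∀ B ∈ F, IsClosed B)
    (hlf : LocallyFinite fun B : F => (B : Set X)) (hA : IsClosed A) (h : 𝒜 ⊆ F) :
    IsClosed (extensionDomain F A 𝒜) :=
  ((isClosed_sInter fun B hB => hclosed B (h hB)).inter hA).union
    (isClosed_setOf_ssubset_simplexAt hclosed hlf h)

section Prescribed

variable (hg : ∀ 𝒜', IsSimplex F 𝒜' → 𝒜 ⊂ 𝒜' → IsCoherentExtension F C A f g 𝒜')
include hg

theorem prescribed_eqOn : EqOn (prescribed F f g 𝒜) f (⋂₀ 𝒜 ∩ A) := by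
  intro x hx
  by_cases hss : 𝒜 ⊂ simplexAt F x
  · rw [prescribed, if_pos hss]
    exact (hg _ (isSimplex_simplexAt_of_ssubset hss) hss).eqOn ⟨mem_sInter_simplexAt, hx.2⟩
  · rw [prescribed, if_neg hss]

theorem mapsTo_prescribed (h𝒜 : 𝒜 ⊆ F) (hcar : ∀ B ∈ F, f '' (B ∩ A) ⊆ C B) :
    MapsTo (prescribed F f g 𝒜) (extensionDomain F A 𝒜) (⋂ B ∈ 𝒜, C B) := by
  rintro x (hx | hss)
  · rw [prescribed_eqOn hg hx, mem_iInter₂]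
    exact fun B hB => hcar B (h𝒜 hB) ⟨x, ⟨hx.1 B hB, hx.2⟩, rfl⟩
  · rw [mem_ofPred_eq] at hss
    rw [prescribed, if_pos hss]
    exact biInter_mono hss.subset (fun _ _ => subset_rfl)
      ((hg _ (isSimplex_simplexAt_of_ssubset hss) hss).mapsTo (mem_univ x))

theorem continuousOn_prescribed (h𝒜 : IsSimplex F 𝒜) (hclosed : ∀ B ∈ F, IsClosed B)
    (hlf : LocallyFinite fun B : F => (B : Set X)) (hA : IsClosed A) (hf : ContinuousOn f A) :
    ContinuousOn (prescribed F f g 𝒜) (extensionDomain F A 𝒜) := by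
  refine ContinuousOn.union_of_isClosed ((hf.mono inter_subset_right).congr
    (prescribed_eqOn hg)) ?_ ((isClosed_sInter fun B hB => hclosed B (h𝒜.subset hB)).inter hA)
    (isClosed_setOf_ssubset_simplexAt hclosed hlf h𝒜.subset)
  rw [setOf_ssubset_simplexAt h𝒜.subset]
  refine (locallyFinite_sInter_insert hlf).continuousOn_iUnion
    (fun B => isClosed_sInter fun B' hB' => hclosed B' (insert_subset B.2.1 h𝒜.subset hB'))
    fun B => ?_
  rcases (⋂₀ insert (B : Set X) 𝒜).eq_empty_or_nonempty with hempty | hne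
  · simp [hempty]
  have hss : 𝒜 ⊂ insert (B : Set X) 𝒜 := ssubset_insert B.2.2
  have hB := hg _ (isSimplex_insert h𝒜.subset B.2.1 hne) hss
  refine hB.continuous.continuousOn.congr fun x hx => ?_
  have hxss : 𝒜 ⊂ simplexAt F x :=
    hss.trans_subset ((subset_simplexAt_iff (insert_subset B.2.1 h𝒜.subset)).2 hx)
  rw [prescribed, if_pos hxss, hB.eq_simplexAt x hx]

end Prescribed

theorem isCoherentExtension_simplexExtension (hclosed : ∀ B ∈ F, IsClosed B)
    (hlf : LocallyFinite fun B : F => (B : Set X)) (hF : LocFinDim F)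
    (hAE : ∀ 𝒜, IsSimplex F 𝒜 → IsAE (⋂ B ∈ 𝒜, C B) X) (hA : IsClosed A)
    (hf : ContinuousOn f A) (hcar : ∀ B ∈ F, f '' (B ∩ A) ⊆ C B) (h𝒜 : IsSimplex F 𝒜) :
    IsCoherentExtension F C A f (simplexExtension F hF C A f) 𝒜 := by
  induction 𝒜 using (wellFounded_ssuperset hF).induction with
  | _ 𝒜 ih =>
  have hg : ∀ 𝒜', IsSimplex F 𝒜' → 𝒜 ⊂ 𝒜' →
      IsCoherentExtension F C A f (simplexExtension F hF C A f) 𝒜' :=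
    fun 𝒜' h𝒜' hss => ih 𝒜' ⟨h𝒜', hss⟩ h𝒜'
  obtain ⟨hcont, hmaps, heq⟩ := simplexExtension_spec (hAE 𝒜 h𝒜 _
    (isClosed_extensionDomain hclosed hlf hA h𝒜.subset) _
    (continuousOn_prescribed hg h𝒜 hclosed hlf hA hf) (mapsTo_prescribed hg h𝒜.subset hcar))
  refine ⟨hcont, hmaps, fun x hx => (heq (Or.inl hx)).trans (prescribed_eqOn hg hx),
    fun x hx => ?_⟩
  rcases ((subset_simplexAt_iff h𝒜.subset).2 hx).eq_or_ssubset with h | h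
  · rw [← h]
  · exact (heq (Or.inr h)).trans (if_pos h)

theorem exists_continuous_extension (hcov : ⋃₀ F = univ) (hclosed : ∀ B ∈ F, IsClosed B)
    (hlf : LocallyFinite fun B : F => (B : Set X)) (hF : LocFinDim F)
    (hAE : ∀ 𝒜, IsSimplex F 𝒜 → IsAE (⋂ B ∈ 𝒜, C B) X) (hA : IsClosed A)
    (hf : ContinuousOn f A) (hcar : ∀ B ∈ F, f '' (B ∩ A) ⊆ C B) :
    ∃ g : X → Y, Continuous g ∧ EqOn g f A ∧ ∀ B ∈ F, g '' B ⊆ C B := by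
  set g := simplexExtension F hF C A f
  have hg (𝒜) (h𝒜 : IsSimplex F 𝒜) : IsCoherentExtension F C A f g 𝒜 :=
    isCoherentExtension_simplexExtension hclosed hlf hF hAE hA hf hcar h𝒜
  have hgAt (x : X) := hg _ (isSimplex_simplexAt hcov x)
  refine ⟨fun x => g (simplexAt F x) x, ?_,
    fun x hx => (hgAt x).eqOn ⟨mem_sInter_simplexAt, hx⟩, fun B hB => ?_⟩
  · refine hlf.continuous (by rwa [← sUnion_eq_iUnion]) (fun B => hclosed _ B.2) fun B => ?_
    rcases (B : Set X).eq_empty_or_nonempty with hempty | hne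
    · simp [hempty]
    have hgB := hg {(B : Set X)} ⟨singleton_nonempty _, singleton_subset_iff.2 B.2, by
      rwa [sInter_singleton]⟩
    exact hgB.continuous.continuousOn.congr fun x hx =>
      (hgB.eq_simplexAt x (by rwa [sInter_singleton])).symm
  · rintro _ ⟨x, hx, rfl⟩
    exact mem_iInter₂.1 ((hgAt x).mapsTo (mem_univ x)) B ⟨hB, hx⟩

end CarrierExtension

/-- Carrier Theorem: if `C : F → G` is a carrier, `F` a closed locally finite locally
finite dimensional cover of `X`, and every nonempty intersection of a subcollection of
`G` is an absolute extensor for `X`, then every continuous map `f` on a closed set `A`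
carried by `C` extends to a continuous map `g` of `X` carried by `C`. -/
theorem stmt6 {X Y : Type*} [TopologicalSpace X] [TopologicalSpace Y]
    (F : Set (Set X)) (G : Set (Set Y)) (C : Set X → Set Y)
    (hcov : ⋃₀ F = univ) (hclosed : ∀ A ∈ F, IsClosed A)
    (hlf : LocallyFinite (fun A : F => (A : Set X)))
    (hlfd : LocFinDim F)
    (hCG : ∀ A ∈ F, C A ∈ G) (hcarrier : IsCarrierOn F C)
    (hAE : ∀ ℬ ⊆ G, ℬ.Nonempty → (⋂₀ ℬ).Nonempty → IsAE (⋂₀ ℬ) X)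
    (A : Set X) (hA : IsClosed A) (f : X → Y) (hf : ContinuousOn f A)
    (hcar : ∀ F' ∈ F, f '' (F' ∩ A) ⊆ C F') :
    ∃ g : X → Y, Continuous g ∧ EqOn g f A ∧ ∀ F' ∈ F, g '' F' ⊆ C F' := by
  refine CarrierExtension.exists_continuous_extension hcov hclosed hlf hlfd (fun 𝒜 h𝒜 => ?_)
    hA hf hcar
  have hne : (⋂₀ (C '' 𝒜)).Nonempty := by
    rw [sInter_image]
    exact hcarrier 𝒜 h𝒜.subset h𝒜.nonempty h𝒜.sInter_nonempty
  rw [← sInter_image]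
  exact hAE _ (image_subset_iff.2 fun B hB => hCG B (h𝒜.subset hB)) (h𝒜.nonempty.image C) hne
end

section
/- Weak Carrier Theorem: Let C : F → G be a carrier where F is an open, locally finite cover of a space X and G is a collection of subsets of a space Y such that the union of every subcollection of G with nonempty intersection is an absolute extensor for X. Then every continuous map f defined on a closed subset of X that is weakly carried by C extends to a continuous map of all of X that is also weakly carried by C. -/
open Set Function Topology Filter

section Helpers

variable {α β : Type*} [TopologicalSpace α] [TopologicalSpace β] {f : α → β}

private lemma cwa_of_closed {s : Set α} (hs : IsClosed s) (hfs : ContinuousOn f s) (x : α) :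
    ContinuousWithinAt f s x := by
  by_cases h : x ∈ s
  · exact hfs x h
  · exact continuousWithinAt_of_notMem_closure (by rwa [hs.closure_eq])

private lemma pasteFinite {ι : Type*} {t : Set ι} (ht : t.Finite) {s : ι → Set α}
    (hcl : ∀ i ∈ t, IsClosed (s i)) (hc : ∀ i ∈ t, ContinuousOn f (s i)) :
    ContinuousOn f (⋃ i ∈ t, s i) := by
  intro x _
  rw [ContinuousWithinAt, nhdsWithin_biUnion ht]
  rw [Filter.tendsto_iSup]
  intro i
  rw [Filter.tendsto_iSup]
  intro hi
  exact cwa_of_closed (hcl i hi) (hc i hi) x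

private lemma pasteTwo {s t : Set α} (hs : IsClosed s) (ht : IsClosed t)
    (hfs : ContinuousOn f s) (hft : ContinuousOn f t) : ContinuousOn f (s ∪ t) :=
  fun x _ => (cwa_of_closed hs hfs x).union (cwa_of_closed ht hft x)

end Helpers

/-- Weak Carrier Theorem: if `C : F → G` is a carrier, `F` an open locally finite
cover of `X`, and the union of every subcollection of `G` with nonempty intersection
is an absolute extensor for `X`, then every continuous map on a closed subset of `X`
weakly carried by `C` extends to a continuous map of `X` weakly carried by `C`. -/
theorem stmt7 {X Y : Type*} [TopologicalSpace X] [TopologicalSpace Y]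
    (F : Set (Set X)) (G : Set (Set Y)) (C : Set X → Set Y)
    (hcov : ⋃₀ F = univ) (hopen : ∀ A ∈ F, IsOpen A)
    (hlf : LocallyFinite (fun A : F => (A : Set X)))
    (hCG : ∀ A ∈ F, C A ∈ G) (hcarrier : IsCarrierOn F C)
    (hAE : ∀ ℬ ⊆ G, ℬ.Nonempty → (⋂₀ ℬ).Nonempty → IsAE (⋃₀ ℬ) X)
    (A : Set X) (hA : IsClosed A) (f : X → Y) (hf : ContinuousOn f A)
    (hwc : ∀ x ∈ A, ∃ F' ∈ F, x ∈ F' ∧ f x ∈ C F') :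
    ∃ g : X → Y, Continuous g ∧ EqOn g f A ∧
      ∀ x : X, ∃ F' ∈ F, x ∈ F' ∧ g x ∈ C F' := by
  classical
  -- the collection of members of `F` containing `x`
  set Sx : X → Set (Set X) := fun x => {B | B ∈ F ∧ x ∈ B} with hSxdef
  -- basic neighbourhoods from local finiteness
  have hnbhd : ∀ x : X, ∃ U : Set X, IsOpen U ∧ x ∈ U ∧
      ∃ T : Set (Set X), T.Finite ∧ ∀ y ∈ U, Sx y ⊆ T := by
    intro x
    obtain ⟨U, hU, hfin⟩ := hlf x
    refine ⟨interior U, isOpen_interior, mem_interior_iff_mem_nhds.2 hU,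
      Subtype.val '' {A : F | ((A : Set X) ∩ U).Nonempty}, hfin.image _, ?_⟩
    intro y hy B hB
    exact ⟨⟨B, hB.1⟩, ⟨y, hB.2, interior_subset hy⟩, rfl⟩
  have hSfin : ∀ x, (Sx x).Finite := by
    intro x
    obtain ⟨U, _, hxU, T, hT, hsub⟩ := hnbhd x
    exact hT.subset (hsub x hxU)
  have hSne : ∀ x, (Sx x).Nonempty := by
    intro x
    have hx : x ∈ ⋃₀ F := by rw [hcov]; trivial
    obtain ⟨B, hBF, hxB⟩ := hx
    exact ⟨B, hBF, hxB⟩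
  have hSsub : ∀ x, ∀ y ∈ ⋂₀ (Sx x), Sx x ⊆ Sx y := fun x y hy B hB => ⟨hB.1, hy B hB⟩
  -- points lying in at most `n` members
  set Xle : ℕ → Set X := fun n => {x | (Sx x).ncard ≤ n} with hXledef
  have hXcl : ∀ n, IsClosed (Xle n) := by
    intro n
    rw [← isOpen_compl_iff, isOpen_iff_forall_mem_open]
    intro x hx
    refine ⟨⋂₀ Sx x, ?_, (hSfin x).isOpen_sInter (fun B hB => hopen B hB.1),
      fun B hB => hB.2⟩
    intro y hy
    simp only [hXledef, mem_compl_iff, mem_setOf_eq, not_le] at hx ⊢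
    exact hx.trans_le (Set.ncard_le_ncard (hSsub x y hy) (hSfin y))
  have hself : ∀ x : X, x ∈ Xle ((Sx x).ncard) := by
    intro x
    simp only [hXledef, mem_setOf_eq]
    exact le_rfl
  have hXmono : ∀ {m n : ℕ}, m ≤ n → Xle m ⊆ Xle n := fun h x hx => le_trans hx h
  have hX0 : A ∪ Xle 0 = A := by
    have h0 : Xle 0 = ∅ := by
      apply eq_empty_iff_forall_notMem.2
      intro x hx
      have hz : (Sx x).ncard = 0 := Nat.le_zero.1 hx
      exact (hSne x).ne_empty ((Set.ncard_eq_zero (hSfin x)).1 hz)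
    rw [h0, union_empty]
  -- the inductive extension step
  have step : ∀ n (g : X → Y), ContinuousOn g (A ∪ Xle n) →
      (∀ x ∈ A ∪ Xle n, ∃ B ∈ F, x ∈ B ∧ g x ∈ C B) →
      ∃ g' : X → Y, ContinuousOn g' (A ∪ Xle (n+1)) ∧
        (∀ x ∈ A ∪ Xle (n+1), ∃ B ∈ F, x ∈ B ∧ g' x ∈ C B) ∧
        EqOn g' g (A ∪ Xle n) := by
    intro n g hg hcar
    set Good : Set (Set X) → Prop :=
      fun S => S ⊆ F ∧ S.Finite ∧ S.ncard = n+1 ∧ (⋂₀ S).Nonempty with hGooddef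
    set XS : Set (Set X) → Set X := fun S => ⋂₀ S ∩ Xle (n+1) with hXSdef
    set KS : Set (Set X) → Set X := fun S => (A ∪ Xle n) ∩ closure (XS S) with hKSdef
    have claim1 : ∀ S, Good S → ∀ z ∈ XS S, Sx z = S := by
      intro S hS z hz
      have hsub : S ⊆ Sx z := fun B hB => ⟨hS.1 hB, hz.1 B hB⟩
      exact (Set.eq_of_subset_of_ncard_le hsub
        (by rw [hS.2.2.1]; exact hz.2) (hSfin z)).symm
    have claim2 : ∀ S, Good S → ∀ y ∈ closure (XS S), Sx y ⊆ S := by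
      intro S hS y hy B hB
      obtain ⟨z, hzB, hzX⟩ := (mem_closure_iff.1 hy) B (hopen B hB.1) hB.2
      rw [← claim1 S hS z hzX]
      exact ⟨hB.1, hzB⟩
    have hex : ∀ S : Set (Set X), ∃ h : X → Y, Good S →
        Continuous h ∧ MapsTo h univ (⋃₀ (C '' S)) ∧ EqOn h g (KS S) := by
      intro S
      by_cases hS : Good S
      · have hSneS : S.Nonempty := Set.nonempty_of_ncard_ne_zero (by rw [hS.2.2.1]; omega)
        have hBsubG : C '' S ⊆ G := by rintro _ ⟨B, hB, rfl⟩; exact hCG B (hS.1 hB)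
        have hInt : (⋂₀ (C '' S)).Nonempty := by
          rw [sInter_image]
          exact hcarrier S hS.1 hSneS hS.2.2.2
        have hAES := hAE (C '' S) hBsubG (hSneS.image C) hInt
        have hKcl : IsClosed (KS S) := (hA.union (hXcl n)).inter isClosed_closure
        have hgc : ContinuousOn g (KS S) := hg.mono inter_subset_left
        have hmap : MapsTo g (KS S) (⋃₀ (C '' S)) := by
          intro y hy
          obtain ⟨B, hBF, hyB, hgB⟩ := hcar y hy.1
          have hBS : B ∈ S := claim2 S hS y hy.2 ⟨hBF, hyB⟩
          exact ⟨C B, mem_image_of_mem C hBS, hgB⟩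
        obtain ⟨h, hhc, hhm, hhe⟩ := hAES (KS S) hKcl g hgc hmap
        exact ⟨h, fun _ => ⟨hhc, hhm, hhe⟩⟩
      · exact ⟨g, fun h => absurd h hS⟩
    choose hfun hfun_spec using hex
    set g' : X → Y := fun x => if (Sx x).ncard = n+1 then hfun (Sx x) x else g x with hg'def
    have hGoodSx : ∀ x, (Sx x).ncard = n+1 → Good (Sx x) := fun x hx =>
      ⟨fun B hB => hB.1, hSfin x, hx, ⟨x, fun B hB => hB.2⟩⟩
    have hXSmem : ∀ x, (Sx x).ncard = n+1 → x ∈ XS (Sx x) := fun x hx =>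
      ⟨fun B hB => hB.2, le_of_eq hx⟩
    have heq1 : EqOn g' g (A ∪ Xle n) := by
      intro y hy
      by_cases hc : (Sx y).ncard = n+1
      · have hyA : y ∈ A := by
          rcases hy with h | h
          · exact h
          · exact absurd (show (Sx y).ncard ≤ n from h) (by omega)
        have hyK : y ∈ KS (Sx y) := ⟨Or.inl hyA, subset_closure (hXSmem y hc)⟩
        simp only [hg'def, if_pos hc]
        exact (hfun_spec (Sx y) (hGoodSx y hc)).2.2 hyK
      · simp only [hg'def, if_neg hc]
    have hD : ∀ S, Good S →
        EqOn g' (hfun S) (closure (XS S) ∩ (A ∪ Xle (n+1))) := by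
      intro S hS y hy
      have hsub : Sx y ⊆ S := claim2 S hS y hy.1
      by_cases hc : (Sx y).ncard = n+1
      · have hSy : Sx y = S := Set.eq_of_subset_of_ncard_le hsub
          (by rw [hS.2.2.1, hc]) hS.2.1
        simp only [hg'def, if_pos hc, hSy]
      · have hle : (Sx y).ncard ≤ n := by
          have h1 : (Sx y).ncard ≤ n+1 := by
            rw [← hS.2.2.1]; exact Set.ncard_le_ncard hsub hS.2.1
          omega
        have hyK : y ∈ KS S := ⟨Or.inr hle, hy.1⟩
        simp only [hg'def, if_neg hc]
        exact ((hfun_spec S hS).2.2 hyK).symm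
    have hcar' : ∀ x ∈ A ∪ Xle (n+1), ∃ B ∈ F, x ∈ B ∧ g' x ∈ C B := by
      intro x hx
      by_cases hc : (Sx x).ncard = n+1
      · have hm := (hfun_spec (Sx x) (hGoodSx x hc)).2.1 (mem_univ x)
        obtain ⟨_, ⟨B, hBS, rfl⟩, hmem⟩ := hm
        refine ⟨B, hBS.1, hBS.2, ?_⟩
        simp only [hg'def, if_pos hc]
        exact hmem
      · have hx' : x ∈ A ∪ Xle n := by
          rcases hx with h | h
          · exact Or.inl h
          · right
            have h1 : (Sx x).ncard ≤ n+1 := h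
            exact (by omega : (Sx x).ncard ≤ n)
        obtain ⟨B, hBF, hxB, hgB⟩ := hcar x hx'
        refine ⟨B, hBF, hxB, ?_⟩
        simp only [hg'def, if_neg hc]
        exact hgB
    have hcont : ContinuousOn g' (A ∪ Xle (n+1)) := by
      intro x hx
      obtain ⟨U, hUo, hxU, T, hTfin, hsubT⟩ := hnbhd x
      set 𝒮 : Set (Set (Set X)) := {S | Good S ∧ S ⊆ T} with h𝒮def
      have h𝒮fin : 𝒮.Finite := hTfin.finite_subsets.subset (fun S hS => hS.2)
      set D : Set (Set X) → Set X := fun S => closure (XS S) ∩ (A ∪ Xle (n+1)) with hDdef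
      have hDcl : ∀ S ∈ 𝒮, IsClosed (D S) := fun S _ =>
        isClosed_closure.inter (hA.union (hXcl (n+1)))
      have hDcont : ∀ S ∈ 𝒮, ContinuousOn g' (D S) := fun S hS =>
        ContinuousOn.congr ((hfun_spec S hS.1).1.continuousOn) (hD S hS.1)
      have hbase : ContinuousOn g' (A ∪ Xle n) := hg.congr heq1
      have hbig : ContinuousOn g' ((A ∪ Xle n) ∪ ⋃ S ∈ 𝒮, D S) :=
        pasteTwo (hA.union (hXcl n)) (h𝒮fin.isClosed_biUnion hDcl) hbase
          (pasteFinite h𝒮fin hDcl hDcont)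
      have hcover : (A ∪ Xle (n+1)) ∩ U ⊆ (A ∪ Xle n) ∪ ⋃ S ∈ 𝒮, D S := by
        rintro y ⟨hy, hyU⟩
        by_cases hc : (Sx y).ncard = n+1
        · right
          exact mem_biUnion (show Sx y ∈ 𝒮 from ⟨hGoodSx y hc, hsubT y hyU⟩)
            ⟨subset_closure (hXSmem y hc), hy⟩
        · left
          rcases hy with h | h
          · exact Or.inl h
          · right
            have h1 : (Sx y).ncard ≤ n+1 := h
            exact (by omega : (Sx y).ncard ≤ n)
      have hUn : U ∈ 𝓝 x := hUo.mem_nhds hxU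
      rw [← continuousWithinAt_inter hUn]
      exact (hbig x (hcover ⟨hx, hxU⟩)).mono hcover
    exact ⟨g', hcont, hcar', heq1⟩
  -- build the sequence of partial extensions
  set stepFun : ℕ → (X → Y) → (X → Y) := fun n g =>
    if h : ContinuousOn g (A ∪ Xle n) ∧ (∀ x ∈ A ∪ Xle n, ∃ B ∈ F, x ∈ B ∧ g x ∈ C B)
    then (step n g h.1 h.2).choose else g with hstepFundef
  set Gs : ℕ → X → Y := fun n => Nat.rec f (fun m gm => stepFun m gm) n with hGsdef
  have hGs0 : Gs 0 = f := rfl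
  have hGsS : ∀ n, Gs (n+1) = stepFun n (Gs n) := fun n => rfl
  have main : ∀ n, ContinuousOn (Gs n) (A ∪ Xle n) ∧
      (∀ x ∈ A ∪ Xle n, ∃ B ∈ F, x ∈ B ∧ Gs n x ∈ C B) := by
    intro n
    induction n with
    | zero =>
      rw [hGs0, hX0]
      exact ⟨hf, hwc⟩
    | succ m ih =>
      have hsp := (step m (Gs m) ih.1 ih.2).choose_spec
      have hGseq : Gs (m+1) = (step m (Gs m) ih.1 ih.2).choose := by
        rw [hGsS m, hstepFundef]
        exact dif_pos ⟨ih.1, ih.2⟩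
      rw [hGseq]
      exact ⟨hsp.1, hsp.2.1⟩
  have hEq : ∀ n, EqOn (Gs (n+1)) (Gs n) (A ∪ Xle n) := by
    intro n
    have hsp := (step n (Gs n) (main n).1 (main n).2).choose_spec
    have hGseq : Gs (n+1) = (step n (Gs n) (main n).1 (main n).2).choose := by
      rw [hGsS n, hstepFundef]
      exact dif_pos ⟨(main n).1, (main n).2⟩
    rw [hGseq]
    exact hsp.2.2
  have chain : ∀ n m, n ≤ m → EqOn (Gs m) (Gs n) (A ∪ Xle n) := by
    intro n m hnm
    induction m, hnm using Nat.le_induction with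
    | base => exact fun x _ => rfl
    | succ m hm ih =>
      intro x hx
      have hx' : x ∈ A ∪ Xle m := union_subset_union_right A (hXmono hm) hx
      calc Gs (m+1) x = Gs m x := hEq m hx'
        _ = Gs n x := ih hx
  set g : X → Y := fun x => Gs ((Sx x).ncard) x with hgdef
  have heqA : EqOn g f A := by
    intro x hx
    have h1 : Gs ((Sx x).ncard) x = Gs 0 x :=
      chain 0 _ (Nat.zero_le _) (by rw [hX0]; exact hx)
    simp only [hgdef]
    rw [h1, hGs0]
  have hcarried : ∀ x : X, ∃ B ∈ F, x ∈ B ∧ g x ∈ C B := by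
    intro x
    exact (main ((Sx x).ncard)).2 x (Or.inr (hself x))
  have hcontg : Continuous g := by
    rw [continuous_iff_continuousAt]
    intro x
    obtain ⟨U, hUo, hxU, T, hTfin, hsubT⟩ := hnbhd x
    have hUk : ∀ y ∈ U, (Sx y).ncard ≤ T.ncard := fun y hy =>
      Set.ncard_le_ncard (hsubT y hy) hTfin
    have hUeq : ∀ y ∈ U, g y = Gs T.ncard y := by
      intro y hy
      exact (chain _ T.ncard (hUk y hy) (Or.inr (hself y))).symm
    have hmemn : A ∪ Xle T.ncard ∈ 𝓝 x :=
      Filter.mem_of_superset (hUo.mem_nhds hxU) (fun y hy => Or.inr (hUk y hy))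
    have hca : ContinuousAt (Gs T.ncard) x := (main T.ncard).1.continuousAt hmemn
    exact hca.congr (Filter.eventuallyEq_of_mem (hUo.mem_nhds hxU)
      (fun y hy => (hUeq y hy).symm))
  exact ⟨g, hcontg, heqA, hcarried⟩
end

section
/- If G is an open cover of a space Y that is weakly regular for X × [0,1] (locally finite, and the union of every subcollection with nonempty intersection is an absolute extensor for X × [0,1]), then any two G-close continuous maps f, g : X → Y are st(G)-homotopic, where st(G) = { st(G, G) : G in G } is the cover by stars. Moreover the homotopy can be chosen such that whenever f(x) and g(x) both lie in some G in G, the path t ↦ H(x,t) lies in the star st(G, G) = union of all members of G meeting G. -/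
open Set Function

/-- The star of an element `G` of the cover `𝒢`: the union of the members of `𝒢`
meeting `G`. -/
def coverStar {Y : Type*} (𝒢 : Set (Set Y)) (G : Set Y) : Set Y :=
  ⋃₀ {G' | G' ∈ 𝒢 ∧ (G' ∩ G).Nonempty}

/-!
For `x : X` let `K x` be the set of members of `𝒢` containing both `f x` and `g x`. By local
finiteness `K x` is finite and `{x | #K x ≤ n}` is closed. By induction on `n` we build a homotopy
on `{x | #K x ≤ n} × I ∪ X × {0, 1}` whose path at `x` stays in `⋃ K x`. For the step, on the
closure of a stratum `{x | K x = S}` with `#S = n + 1` the map built so far takes values in `⋃ S`,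
which is an absolute extensor since `f x ∈ ⋂ S`, so the map extends over that closure. Two such
closures for different `S` meet only where `#K ≤ n`, and together they form a locally finite
family, so the extensions glue. Near each point `#K` is bounded, so the stages stabilise locally
and their limit is continuous. Finally `⋃ K x ⊆ st(G)` whenever `f x ∈ G`.
-/

open Filter Topology

section Gluing

variable {ι α β : Type*} [TopologicalSpace α] [TopologicalSpace β]

theorem LocallyFinite.exists_continuousOn_union_iUnion {B : Set α} {A : ι → Set α}
    (hB : IsClosed B) (hA : LocallyFinite A) (hAc : ∀ i, IsClosed (A i))
    {v : α → β} {u : ι → α → β} (hv : ContinuousOn v B) (hu : ∀ i, ContinuousOn (u i) (A i))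
    (huv : ∀ i, EqOn (u i) v (A i ∩ B)) (huu : ∀ i j, EqOn (u i) (u j) (A i ∩ A j)) :
    ∃ w : α → β, ContinuousOn w (B ∪ ⋃ i, A i) ∧ EqOn w v B ∧ ∀ i, EqOn w (u i) (A i) := by
  classical
  let w : α → β := fun x => if hx : ∃ i, x ∈ A i then u hx.choose x else v x
  have hwA : ∀ i, EqOn w (u i) (A i) := fun i x hx => by
    have hx' : ∃ i, x ∈ A i := ⟨i, hx⟩
    simp only [w, dif_pos hx']
    exact huu _ _ ⟨hx'.choose_spec, hx⟩
  have hwB : EqOn w v B := fun x hx => by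
    by_cases hx' : ∃ i, x ∈ A i
    · exact (hwA _ hx'.choose_spec).trans (huv _ ⟨hx'.choose_spec, hx⟩)
    · simp only [w, dif_neg hx']
  refine ⟨w, ?_, hwB, hwA⟩
  rw [show B ∪ ⋃ i, A i = ⋃ o, Option.elim' B A o from (iUnion_option (Option.elim' B A)).symm]
  exact (hA.option_elim' B).continuousOn_iUnion (fun o => o.casesOn hB hAc)
    fun o => o.casesOn (hv.congr hwB) fun i => (hu i).congr (hwA i)

theorem continuous_of_eqOn_of_monotone {D : ℕ → Set α} (hD : Monotone D)
    (hnhds : ∀ x, ∃ n, D n ∈ 𝓝 x) {h : ℕ → α → β} (hcont : ∀ n, ContinuousOn (h n) (D n))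
    (hagree : ∀ n, EqOn (h (n + 1)) (h n) (D n)) {N : α → ℕ} (hN : ∀ x, x ∈ D (N x)) :
    Continuous fun x => h (N x) x := by
  have hle : ∀ m n, m ≤ n → EqOn (h n) (h m) (D m) := fun m n hmn => by
    induction n, hmn using Nat.le_induction with
    | base => exact fun _ _ => rfl
    | succ n hmn ih => exact fun x hx => (hagree n (hD hmn hx)).trans (ih hx)
  have heq : ∀ n x, x ∈ D n → h (N x) x = h n x := fun n x hx => by
    rcases le_total (N x) n with hNn | hnN
    · exact (hle _ _ hNn (hN x)).symm
    · exact hle _ _ hnN hx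
  refine continuous_iff_continuousAt.2 fun x => ?_
  obtain ⟨n, hn⟩ := hnhds x
  exact ((hcont n).continuousAt hn).congr_of_eventuallyEq
    (Filter.mem_of_superset hn fun y hy => heq n y hy)

end Gluing

theorem exists_seq_of_exists_succ {α : Type*} {P : ℕ → α → Prop} {R : ℕ → α → α → Prop}
    (h0 : ∃ a, P 0 a) (hsucc : ∀ n a, P n a → ∃ b, P (n + 1) b ∧ R n a b) :
    ∃ u : ℕ → α, ∀ n, P n (u n) ∧ R n (u n) (u (n + 1)) := by
  obtain ⟨a₀, ha₀⟩ := h0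
  choose s hsP hsR using hsucc
  let v : ∀ n, {a // P n a} := fun n =>
    Nat.rec ⟨a₀, ha₀⟩ (fun n a => ⟨s n a a.2, hsP n a a.2⟩) n
  exact ⟨fun n => (v n).1, fun n => ⟨(v n).2, hsR n _ (v n).2⟩⟩

section Multiplicity

variable {ι X : Type*} [TopologicalSpace X] {U : ι → Set X}

theorem isClosed_setOf_subset_of_isOpen (hU : ∀ i, IsOpen (U i)) (S : Set ι) :
    IsClosed {x | {i | x ∈ U i} ⊆ S} := by
  have : {x | {i | x ∈ U i} ⊆ S} = ⋂ i ∈ Sᶜ, (U i)ᶜ := by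
    ext x
    simp only [mem_ofPred_eq, subset_def, mem_iInter, mem_compl_iff]
    exact forall_congr' fun i => not_imp_not.symm
  rw [this]
  exact isClosed_biInter fun i _ => (hU i).isClosed_compl

theorem subset_of_mem_closure_setOf_eq (hU : ∀ i, IsOpen (U i)) {S : Set ι} {x : X}
    (hx : x ∈ closure {y | {i | y ∈ U i} = S}) : {i | x ∈ U i} ⊆ S :=
  closure_minimal (fun _ hy => hy.subset) (isClosed_setOf_subset_of_isOpen hU S) hx

theorem eq_or_ncard_le_of_mem_closure (hU : ∀ i, IsOpen (U i)) {S : Set ι} {n : ℕ}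
    (hS : S.ncard = n + 1) {x : X} (hx : x ∈ closure {y | {i | y ∈ U i} = S}) :
    {i | x ∈ U i} = S ∨ {i | x ∈ U i}.ncard ≤ n := by
  refine (subset_of_mem_closure_setOf_eq hU hx).eq_or_ssubset.imp id fun hlt => ?_
  have := ncard_lt_ncard hlt (finite_of_ncard_ne_zero (by omega))
  omega

namespace LocallyFinite

theorem isClosed_setOf_ncard_le (hlf : LocallyFinite U) (hU : ∀ i, IsOpen (U i)) (n : ℕ) :
    IsClosed {x | {i | x ∈ U i}.ncard ≤ n} := by
  rw [← isOpen_compl_iff, isOpen_iff_mem_nhds]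
  intro x hx
  obtain ⟨T, hTx, hTcard⟩ := exists_subset_card_eq (Nat.succ_le_of_lt (not_le.1 hx))
  have hT : T.Finite := (hlf.point_finite x).subset hTx
  filter_upwards [(biInter_mem hT).2 fun i hi => (hU i).mem_nhds (hTx hi)] with y hy
  have : T.ncard ≤ {i | y ∈ U i}.ncard :=
    ncard_le_ncard (fun i hi => mem_iInter₂.1 hy i hi) (hlf.point_finite y)
  exact fun hy' => by simp only [mem_ofPred_eq] at hy'; omega

theorem locallyFinite_setOf_eq (hlf : LocallyFinite U) :
    LocallyFinite fun S : Set ι => {x | {i | x ∈ U i} = S} := by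
  intro x
  obtain ⟨V, hV, hfin⟩ := hlf x
  refine ⟨V, hV, hfin.finite_subsets.subset ?_⟩
  rintro S ⟨y, rfl, hy⟩ i hi
  exact ⟨y, hi, hy⟩

theorem exists_eventually_ncard_le (hlf : LocallyFinite U) (x : X) :
    ∃ N, ∀ᶠ y in 𝓝 x, {i | y ∈ U i}.ncard ≤ N := by
  obtain ⟨V, hV, hfin⟩ := hlf x
  exact ⟨_, Filter.mem_of_superset hV fun y hy =>
    ncard_le_ncard (t := {i | (U i ∩ V).Nonempty}) (fun i hi => ⟨y, hi, hy⟩) hfin⟩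

end LocallyFinite

end Multiplicity

section Stages

variable {X Y : Type*} (𝒢 : Set (Set Y)) (f g : X → Y)

def commonMembers (x : X) : Set (Set Y) := {G | G ∈ 𝒢 ∧ f x ∈ G ∧ g x ∈ G}

def stageDomain (n : ℕ) : Set (X × unitInterval) :=
  {x | (commonMembers 𝒢 f g x).ncard ≤ n} ×ˢ univ ∪ univ ×ˢ {0, 1}

def commonMembersOfCard (k : ℕ) : Set (Set (Set Y)) :=
  commonMembers 𝒢 f g '' {x | (commonMembers 𝒢 f g x).ncard = k}

variable {𝒢 f g}

theorem sUnion_commonMembers_subset_coverStar {x : X} {G : Set Y} (hG : f x ∈ G) :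
    ⋃₀ commonMembers 𝒢 f g x ⊆ coverStar 𝒢 G :=
  sUnion_mono fun _ ⟨hG', hfG', _⟩ => ⟨hG', f x, hfG', hG⟩

theorem mk_mem_stageDomain_of_ncard_le {n : ℕ} {x : X} (hx : (commonMembers 𝒢 f g x).ncard ≤ n)
    (t : unitInterval) : (x, t) ∈ stageDomain 𝒢 f g n :=
  Or.inl ⟨hx, mem_univ t⟩

theorem mk_zero_mem_stageDomain (n : ℕ) (x : X) : (x, 0) ∈ stageDomain 𝒢 f g n :=
  Or.inr ⟨mem_univ x, by simp⟩

theorem mk_one_mem_stageDomain (n : ℕ) (x : X) : (x, 1) ∈ stageDomain 𝒢 f g n :=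
  Or.inr ⟨mem_univ x, by simp⟩

theorem stageDomain_mono : Monotone (stageDomain 𝒢 f g) := fun _ _ hmn =>
  union_subset_union_left _ (prod_mono_left fun _ hx => le_trans hx hmn)

theorem stageDomain_succ_subset [TopologicalSpace X] (n : ℕ) :
    stageDomain 𝒢 f g (n + 1) ⊆ stageDomain 𝒢 f g n ∪
      ⋃ S : commonMembersOfCard 𝒢 f g (n + 1), closure {x | commonMembers 𝒢 f g x = S} ×ˢ univ := by
  rintro ⟨x, t⟩ (⟨hx, -⟩ | hb)
  · by_cases hxn : (commonMembers 𝒢 f g x).ncard ≤ n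
    · exact Or.inl (mk_mem_stageDomain_of_ncard_le hxn t)
    · refine Or.inr (mem_iUnion.2 ⟨⟨_, x, ?_, rfl⟩, subset_closure rfl, mem_univ t⟩)
      simp only [mem_ofPred_eq] at hx ⊢
      omega
  · exact Or.inl (Or.inr hb)

end Stages

section Homotopy

variable {X Y : Type*} [TopologicalSpace X] [TopologicalSpace Y]
  (𝒢 : Set (Set Y)) (f g : X → Y)

structure IsStageHomotopy (n : ℕ) (h : X × unitInterval → Y) : Prop where
  continuousOn : ContinuousOn h (stageDomain 𝒢 f g n)
  apply_zero : ∀ x, h (x, 0) = f x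
  apply_one : ∀ x, h (x, 1) = g x
  mem_sUnion : ∀ x, (commonMembers 𝒢 f g x).ncard ≤ n → ∀ t,
    h (x, t) ∈ ⋃₀ commonMembers 𝒢 f g x

variable {𝒢 f g}

theorem isOpen_setOf_mem_commonMembers (hopen : ∀ G ∈ 𝒢, IsOpen G) (hf : Continuous f)
    (hg : Continuous g) (G : Set Y) : IsOpen {x | G ∈ commonMembers 𝒢 f g x} := by
  by_cases hG : G ∈ 𝒢
  · convert ((hopen G hG).preimage hf).inter ((hopen G hG).preimage hg) using 1
    ext x
    simp [commonMembers, hG]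
  · convert isOpen_empty
    ext x
    simp [commonMembers, hG]

theorem locallyFinite_setOf_mem_commonMembers (hlf : LocallyFinite fun G : 𝒢 => (G : Set Y))
    (hf : Continuous f) : LocallyFinite fun G => {x | G ∈ commonMembers 𝒢 f g x} := by
  intro x
  obtain ⟨V, hV, hfin⟩ := hlf.preimage_continuous hf x
  refine ⟨V, hV, (hfin.image Subtype.val).subset ?_⟩
  rintro G ⟨y, ⟨hG, hfy, -⟩, hy⟩
  exact ⟨⟨G, hG⟩, ⟨y, hfy, hy⟩, rfl⟩

theorem isClosed_stageDomain (hopen : ∀ G ∈ 𝒢, IsOpen G)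
    (hlf : LocallyFinite fun G : 𝒢 => (G : Set Y)) (hf : Continuous f) (hg : Continuous g)
    (n : ℕ) : IsClosed (stageDomain 𝒢 f g n) :=
  (((locallyFinite_setOf_mem_commonMembers hlf hf).isClosed_setOf_ncard_le
      (isOpen_setOf_mem_commonMembers hopen hf hg) n).prod isClosed_univ).union
    (isClosed_univ.prod (toFinite _).isClosed)

theorem exists_isStageHomotopy_zero (hlf : LocallyFinite fun G : 𝒢 => (G : Set Y))
    (hf : Continuous f) (hg : Continuous g) (hclose : ∀ x, ∃ G ∈ 𝒢, f x ∈ G ∧ g x ∈ G) :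
    ∃ h, IsStageHomotopy 𝒢 f g 0 h := by
  have hpos : ∀ x, ¬ (commonMembers 𝒢 f g x).ncard ≤ 0 := fun x hx => by
    obtain ⟨G, hG⟩ := hclose x
    have hfin : (commonMembers 𝒢 f g x).Finite :=
      (locallyFinite_setOf_mem_commonMembers hlf hf).point_finite x
    have := (ncard_pos hfin).2 ⟨G, hG⟩
    omega
  classical
  refine ⟨fun p => if p.2 = 0 then f p.1 else g p.1, ?_, fun x => if_pos rfl,
    fun x => if_neg one_ne_zero, fun x hx => (hpos x hx).elim⟩
  have hD : stageDomain 𝒢 f g 0 = univ ×ˢ {0} ∪ univ ×ˢ {1} := by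
    rw [← prod_union, ← insert_eq]
    simp [stageDomain, hpos]
  rw [hD]
  refine ContinuousOn.union_of_isClosed ?_ ?_ (isClosed_univ.prod isClosed_singleton)
    (isClosed_univ.prod isClosed_singleton)
  · exact (hf.comp continuous_fst).continuousOn.congr fun p hp => if_pos hp.2
  · refine (hg.comp continuous_fst).continuousOn.congr fun p hp => if_neg ?_
    rw [hp.2]
    exact one_ne_zero

theorem IsStageHomotopy.exists_extension (hopen : ∀ G ∈ 𝒢, IsOpen G)
    (hlf : LocallyFinite fun G : 𝒢 => (G : Set Y))
    (hAE : ∀ ℬ ⊆ 𝒢, ℬ.Nonempty → (⋂₀ ℬ).Nonempty → IsAE (⋃₀ ℬ) (X × unitInterval))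
    (hf : Continuous f) (hg : Continuous g) (hclose : ∀ x, ∃ G ∈ 𝒢, f x ∈ G ∧ g x ∈ G)
    {n : ℕ} {h : X × unitInterval → Y} (hh : IsStageHomotopy 𝒢 f g n h) (x₀ : X) :
    ∃ u : X × unitInterval → Y, Continuous u ∧ (∀ p, u p ∈ ⋃₀ commonMembers 𝒢 f g x₀) ∧
      EqOn u h (closure {x | commonMembers 𝒢 f g x = commonMembers 𝒢 f g x₀} ×ˢ univ ∩
        stageDomain 𝒢 f g n) := by
  set S := commonMembers 𝒢 f g x₀
  obtain ⟨hcont, h0, h1, hmem⟩ := hh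
  have hmaps : MapsTo h (closure {x | commonMembers 𝒢 f g x = S} ×ˢ univ ∩
      stageDomain 𝒢 f g n) (⋃₀ S) := by
    rintro ⟨x, t⟩ ⟨⟨hx, -⟩, ⟨hxn, -⟩ | ⟨-, ht⟩⟩
    · have hxS : commonMembers 𝒢 f g x ⊆ S :=
        subset_of_mem_closure_setOf_eq (isOpen_setOf_mem_commonMembers hopen hf hg) hx
      exact sUnion_mono hxS (hmem x hxn t)
    · obtain ⟨G, hG, hfG, hgG⟩ := hclose x
      have hGS : G ∈ S :=
        subset_of_mem_closure_setOf_eq (isOpen_setOf_mem_commonMembers hopen hf hg) hx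
          ⟨hG, hfG, hgG⟩
      rcases ht with rfl | rfl
      · rw [h0]
        exact ⟨G, hGS, hfG⟩
      · rw [h1]
        exact ⟨G, hGS, hgG⟩
  obtain ⟨G, hG⟩ := hclose x₀
  obtain ⟨u, hu, huS, huh⟩ := hAE S (fun _ hG => hG.1) ⟨G, hG⟩ ⟨f x₀, fun _ hG => hG.2.1⟩ _
    ((isClosed_closure.prod isClosed_univ).inter (isClosed_stageDomain hopen hlf hf hg n)) h
    (hcont.mono inter_subset_right) hmaps
  exact ⟨u, hu, fun p => huS (mem_univ p), huh⟩

theorem IsStageHomotopy.exists_succ (hopen : ∀ G ∈ 𝒢, IsOpen G)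
    (hlf : LocallyFinite fun G : 𝒢 => (G : Set Y))
    (hAE : ∀ ℬ ⊆ 𝒢, ℬ.Nonempty → (⋂₀ ℬ).Nonempty → IsAE (⋃₀ ℬ) (X × unitInterval))
    (hf : Continuous f) (hg : Continuous g) (hclose : ∀ x, ∃ G ∈ 𝒢, f x ∈ G ∧ g x ∈ G)
    {n : ℕ} {h : X × unitInterval → Y} (hh : IsStageHomotopy 𝒢 f g n h) :
    ∃ h', IsStageHomotopy 𝒢 f g (n + 1) h' ∧ EqOn h' h (stageDomain 𝒢 f g n) := by
  let A : commonMembersOfCard 𝒢 f g (n + 1) → Set (X × unitInterval) :=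
    fun S => closure {x | commonMembers 𝒢 f g x = S} ×ˢ univ
  have hext : ∀ S : commonMembersOfCard 𝒢 f g (n + 1), ∃ u : X × unitInterval → Y,
      Continuous u ∧ (∀ p, u p ∈ ⋃₀ (S : Set (Set Y))) ∧ EqOn u h (A S ∩ stageDomain 𝒢 f g n) := by
    rintro ⟨_, x₀, -, rfl⟩
    exact hh.exists_extension hopen hlf hAE hf hg hclose x₀
  choose u hu_cont hu_mem hu_eq using hext
  have hA_eq : ∀ S : commonMembersOfCard 𝒢 f g (n + 1), ∀ p ∈ A S,
      p ∉ stageDomain 𝒢 f g n → commonMembers 𝒢 f g p.1 = S := by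
    rintro ⟨_, x₀, hx₀, rfl⟩ ⟨x, t⟩ hp hpD
    exact (eq_or_ncard_le_of_mem_closure (isOpen_setOf_mem_commonMembers hopen hf hg) hx₀
      hp.1).resolve_right fun hle => hpD (mk_mem_stageDomain_of_ncard_le hle t)
  have hu_agree : ∀ S S' : commonMembersOfCard 𝒢 f g (n + 1),
      EqOn (u S) (u S') (A S ∩ A S') := by
    intro S S' p hp
    by_cases hpD : p ∈ stageDomain 𝒢 f g n
    · exact (hu_eq S ⟨hp.1, hpD⟩).trans (hu_eq S' ⟨hp.2, hpD⟩).symm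
    · obtain rfl : S = S' :=
        Subtype.ext ((hA_eq S p hp.1 hpD).symm.trans (hA_eq S' p hp.2 hpD))
      rfl
  have hA : LocallyFinite A :=
    (((locallyFinite_setOf_mem_commonMembers hlf hf).locallyFinite_setOf_eq.comp_injective
      Subtype.val_injective).closure).prod_right _
  obtain ⟨w, hw_cont, hw_h, hw_u⟩ := hA.exists_continuousOn_union_iUnion
    (isClosed_stageDomain hopen hlf hf hg n) (fun _ => isClosed_closure.prod isClosed_univ)
    hh.continuousOn (fun S => (hu_cont S).continuousOn) hu_eq hu_agree
  refine ⟨w, ⟨hw_cont.mono (stageDomain_succ_subset n),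
    fun x => (hw_h (mk_zero_mem_stageDomain n x)).trans (hh.apply_zero x),
    fun x => (hw_h (mk_one_mem_stageDomain n x)).trans (hh.apply_one x), fun x hx t => ?_⟩, hw_h⟩
  by_cases hxn : (commonMembers 𝒢 f g x).ncard ≤ n
  · rw [hw_h (mk_mem_stageDomain_of_ncard_le hxn t)]
    exact hh.mem_sUnion x hxn t
  · let S : commonMembersOfCard 𝒢 f g (n + 1) :=
      ⟨_, x, by simp only [mem_ofPred_eq]; omega, rfl⟩
    rw [@hw_u S (x, t) ⟨subset_closure rfl, mem_univ t⟩]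
    exact hu_mem S _

theorem exists_homotopy_mem_sUnion_commonMembers (hopen : ∀ G ∈ 𝒢, IsOpen G)
    (hlf : LocallyFinite fun G : 𝒢 => (G : Set Y))
    (hAE : ∀ ℬ ⊆ 𝒢, ℬ.Nonempty → (⋂₀ ℬ).Nonempty → IsAE (⋃₀ ℬ) (X × unitInterval))
    (hf : Continuous f) (hg : Continuous g) (hclose : ∀ x, ∃ G ∈ 𝒢, f x ∈ G ∧ g x ∈ G) :
    ∃ H : X × unitInterval → Y, Continuous H ∧ (∀ x, H (x, 0) = f x) ∧
      (∀ x, H (x, 1) = g x) ∧ ∀ x t, H (x, t) ∈ ⋃₀ commonMembers 𝒢 f g x := by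
  obtain ⟨h, hh⟩ := exists_seq_of_exists_succ (exists_isStageHomotopy_zero hlf hf hg hclose)
    fun n _ hn => hn.exists_succ hopen hlf hAE hf hg hclose
  have hnhds : ∀ p : X × unitInterval, ∃ N, stageDomain 𝒢 f g N ∈ 𝓝 p := fun p => by
    obtain ⟨N, hN⟩ := (locallyFinite_setOf_mem_commonMembers hlf hf).exists_eventually_ncard_le p.1
    exact ⟨N, mem_of_superset (prod_mem_nhds hN univ_mem) fun q hq =>
      mk_mem_stageDomain_of_ncard_le hq.1 q.2⟩
  refine ⟨fun p => h (commonMembers 𝒢 f g p.1).ncard p,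
    continuous_of_eqOn_of_monotone stageDomain_mono hnhds (fun n => (hh n).1.continuousOn)
      (fun n => (hh n).2) fun p => mk_mem_stageDomain_of_ncard_le le_rfl p.2,
    fun x => (hh _).1.apply_zero x, fun x => (hh _).1.apply_one x,
    fun x t => (hh _).1.mem_sUnion x le_rfl t⟩

end Homotopy

theorem stmt9_general {X Y : Type*} [TopologicalSpace X] [TopologicalSpace Y]
    (𝒢 : Set (Set Y)) (hopen : ∀ G ∈ 𝒢, IsOpen G)
    (hlf : LocallyFinite (fun G : 𝒢 => (G : Set Y)))
    (hAE : ∀ ℬ ⊆ 𝒢, ℬ.Nonempty → (⋂₀ ℬ).Nonempty → IsAE (⋃₀ ℬ) (X × unitInterval))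
    (f g : X → Y) (hf : Continuous f) (hg : Continuous g)
    (hclose : ∀ x : X, ∃ G ∈ 𝒢, f x ∈ G ∧ g x ∈ G) :
    ∃ H : X × unitInterval → Y, Continuous H ∧
      (∀ x, H (x, 0) = f x) ∧ (∀ x, H (x, 1) = g x) ∧
      (∀ x, ∃ G ∈ 𝒢, ∀ t, H (x, t) ∈ coverStar 𝒢 G) ∧
      (∀ G ∈ 𝒢, ∀ x, f x ∈ G → g x ∈ G → ∀ t, H (x, t) ∈ coverStar 𝒢 G) := by
  obtain ⟨H, hH, hH0, hH1, hHmem⟩ :=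
    exists_homotopy_mem_sUnion_commonMembers hopen hlf hAE hf hg hclose
  refine ⟨H, hH, hH0, hH1, fun x => ?_,
    fun G _ x hfG _ t => sUnion_commonMembers_subset_coverStar hfG (hHmem x t)⟩
  obtain ⟨G, hG, hfG, -⟩ := hclose x
  exact ⟨G, hG, fun t => sUnion_commonMembers_subset_coverStar hfG (hHmem x t)⟩

/-- If `𝒢` is an open cover of `Y` weakly regular for `X × [0,1]`, then any two
`𝒢`-close continuous maps `f, g : X → Y` are `st 𝒢`-homotopic, by a homotopy whose
path at `x` lies in the star of any member of `𝒢` containing both `f x` and `g x`. -/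
theorem stmt9 {X Y : Type*} [TopologicalSpace X] [TopologicalSpace Y]
    (𝒢 : Set (Set Y)) (hcov : ⋃₀ 𝒢 = univ) (hopen : ∀ G ∈ 𝒢, IsOpen G)
    (hlf : LocallyFinite (fun G : 𝒢 => (G : Set Y)))
    (hAE : ∀ ℬ ⊆ 𝒢, ℬ.Nonempty → (⋂₀ ℬ).Nonempty → IsAE (⋃₀ ℬ) (X × unitInterval))
    (f g : X → Y) (hf : Continuous f) (hg : Continuous g)
    (hclose : ∀ x : X, ∃ G ∈ 𝒢, f x ∈ G ∧ g x ∈ G) :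
    ∃ H : X × unitInterval → Y, Continuous H ∧
      (∀ x, H (x, 0) = f x) ∧ (∀ x, H (x, 1) = g x) ∧
      (∀ x, ∃ G ∈ 𝒢, ∀ t, H (x, t) ∈ coverStar 𝒢 G) ∧
      (∀ G ∈ 𝒢, ∀ x, f x ∈ G → g x ∈ G → ∀ t, H (x, t) ∈ coverStar 𝒢 G) :=
  stmt9_general 𝒢 hopen hlf hAE f g hf hg hclose
end

section
/- Let F be a point-finite cover of a space X. For each subcollection A of F with nonempty intersection, let σ(A) be the closure of the set of points of X belonging exactly to the elements of A (i.e., σ(A) = cl(⋂A \ ⋃(F \ A))), and let v(A) denote the closed simplex of the nerve N(F) spanned by the vertices corresponding to the elements of A. Then the assignment K(σ(A)) = v(A) is a carrier: whenever finitely many sets σ(A_1), ..., σ(A_k) have a common point, the simplices v(A_1), ..., v(A_k) have a common point in the realization of N(F). (For the open-cover case, if x ∈ ⋂_i σ(A_i), then A = {F ∈ F : x ∈ F} is contained in each A_i, so all v(A_i) contain the simplex v(A).) -/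
open Set Function

/-- The closed simplex `v(𝒜)` of the nerve spanned by the vertices corresponding to
the members of `𝒜`: points of the realization supported on `𝒜`. -/
def closedSimplex {X : Type*} (F : Set (Set X)) (𝒜 : Set (Set X)) :
    Set (Set X → ℝ) :=
  {p | IsNervePoint F p ∧ Function.support p ⊆ 𝒜}

/-- The assignment `σ(𝒜) ↦ v(𝒜)` is a carrier: for an open point-finite cover `F`, if
a point `x` lies in every `σ(𝒜 i) = cl(⋂ 𝒜 i \ ⋃ (F \ 𝒜 i))` for finitely many
subcollections `𝒜 i` of `F` with nonempty intersections, then the closed simplices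
`v(𝒜 i)` have a common point in the realization of the nerve. -/
theorem stmt11 {X : Type*} [TopologicalSpace X] (F : Set (Set X))
    (hcov : ∀ x : X, ∃ A ∈ F, x ∈ A)
    (hpf : ∀ x : X, {A | A ∈ F ∧ x ∈ A}.Finite)
    (hopen : ∀ A ∈ F, IsOpen A)
    {ι : Type*} [Finite ι] [Nonempty ι] (𝒜 : ι → Set (Set X))
    (h𝒜 : ∀ i, 𝒜 i ⊆ F) (hfin : ∀ i, (𝒜 i).Finite)
    (hne : ∀ i, (⋂₀ 𝒜 i).Nonempty)
    (x : X) (hx : ∀ i, x ∈ closure (⋂₀ 𝒜 i \ ⋃₀ (F \ 𝒜 i))) :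
    (⋂ i, closedSimplex F (𝒜 i)).Nonempty := by
  classical
  set S : Set (Set X) := {A | A ∈ F ∧ x ∈ A} with hS
  have hSfin : S.Finite := hpf x
  have hSne : S.Nonempty := by
    obtain ⟨A, hA, hxA⟩ := hcov x
    exact ⟨A, hA, hxA⟩
  -- the key fact: S ⊆ 𝒜 i for every i
  have hkey : ∀ i, S ⊆ 𝒜 i := by
    intro i B hB
    by_contra hB'
    have hBopen : IsOpen B := hopen B hB.1
    have := hx i
    rw [mem_closure_iff] at this
    obtain ⟨y, hyB, hy⟩ := this B hBopen hB.2
    exact hy.2 ⟨B, ⟨hB.1, hB'⟩, hyB⟩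
  set s : Finset (Set X) := hSfin.toFinset with hs
  have hsne : s.Nonempty := by
    simpa [hs, Set.Finite.toFinset_nonempty] using hSne
  have hn : (0 : ℝ) < (s.card : ℝ) := by
    exact_mod_cast Finset.card_pos.mpr hsne
  set p : Set X → ℝ := fun B => if B ∈ s then (s.card : ℝ)⁻¹ else 0 with hp
  have hsupp : Function.support p = ↑s := by
    ext B
    by_cases hB : B ∈ s <;>
      simp [hp, Function.mem_support, hB, ne_eq, inv_eq_zero, hn.ne']
  have hsub : ∀ i, Function.support p ⊆ 𝒜 i := by
    intro i
    rw [hsupp]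
    intro B hB
    exact hkey i (by simpa [hs] using hB)
  refine ⟨p, ?_⟩
  simp only [Set.mem_iInter, closedSimplex, Set.mem_setOf_eq]
  have hnp : IsNervePoint F p := by
    refine ⟨by rw [hsupp]; exact s.finite_toSet, ?_, ?_, ?_, ?_⟩
    · intro A
      simp only [hp]
      split
      · positivity
      · exact le_refl 0
    · rw [hsupp]
      intro B hB
      have : B ∈ S := by simpa [hs] using hB
      exact this.1
    · rw [finsum_eq_finset_sum_of_support_subset p (by rw [hsupp])]
      have : ∀ B ∈ s, p B = (s.card : ℝ)⁻¹ := by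
        intro B hB; simp [hp, hB]
      rw [Finset.sum_congr rfl this, Finset.sum_const, nsmul_eq_mul]
      field_simp
    · refine ⟨x, ?_⟩
      rw [hsupp]
      intro B hB
      have : B ∈ S := by simpa [hs] using hB
      exact this.2
  exact fun i => ⟨hnp, hsub i⟩
end

section
/- Paracompact refinement lemma for weak carriers: Let X be a paracompact space, C : F → G a carrier with G open, and f : A → Y a map on a closed subset A of X weakly carried by C. Then there exists a locally finite open cover H of X refining F and a carrier D : H → F such that H ⊆ D(H) for all H ∈ H and f is weakly carried by the composition C ∘ D. Consequently (via the Weak Carrier Theorem) the local finiteness assumption on F can be dropped when X is paracompact and G is open. -/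
open Set Function

/-- Paracompact refinement lemma for weak carriers: if `X` is paracompact,
`C : F → G` is a carrier with `F`, `G` open, and `f` is a map on a closed subset `A`
of `X` weakly carried by `C`, then there is a locally finite open cover `ℋ` of `X`
refining `F` and a carrier `D : ℋ → F` with `h ⊆ D h` for all `h ∈ ℋ` such that `f` is
weakly carried by `C ∘ D`. -/
theorem stmt18 {X Y : Type*} [TopologicalSpace X] [ParacompactSpace X]
    [TopologicalSpace Y]
    (F : Set (Set X)) (G : Set (Set Y)) (C : Set X → Set Y)
    (hcov : ⋃₀ F = univ) (hopenF : ∀ A ∈ F, IsOpen A)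
    (hopenG : ∀ B ∈ G, IsOpen B)
    (hCG : ∀ A ∈ F, C A ∈ G) (hcarrier : IsCarrierOn F C)
    (A : Set X) (hA : IsClosed A) (f : X → Y) (hf : ContinuousOn f A)
    (hwc : ∀ x ∈ A, ∃ F' ∈ F, x ∈ F' ∧ f x ∈ C F') :
    ∃ (ℋ : Set (Set X)) (D : Set X → Set X),
      ⋃₀ ℋ = univ ∧ (∀ h ∈ ℋ, IsOpen h) ∧
      LocallyFinite (fun h : ℋ => (h : Set X)) ∧
      (∀ h ∈ ℋ, D h ∈ F) ∧ (∀ h ∈ ℋ, h ⊆ D h) ∧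
      IsCarrierOn ℋ D ∧
      (∀ x ∈ A, ∃ h ∈ ℋ, x ∈ h ∧ f x ∈ C (D h)) := by
  classical
  -- For each point x, find an open U ∋ x and F' ∈ F with U ⊆ F' and U ∩ A ⊆ f⁻¹(C F')
  have key : ∀ x : X, ∃ U Fx : Set X, IsOpen U ∧ x ∈ U ∧ Fx ∈ F ∧ U ⊆ Fx ∧
      ∀ y ∈ U ∩ A, f y ∈ C Fx := by
    intro x
    by_cases hx : x ∈ A
    · obtain ⟨F', hF', hxF', hfx⟩ := hwc x hx
      have hnhds : C F' ∈ nhds (f x) := (hopenG _ (hCG _ hF')).mem_nhds hfx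
      have := Filter.mem_map.mp ((hf x hx) hnhds)
      rw [mem_nhdsWithin] at this
      obtain ⟨V, hVopen, hxV, hV⟩ := this
      exact ⟨F' ∩ V, F', (hopenF _ hF').inter hVopen, ⟨hxF', hxV⟩, hF', inter_subset_left,
        fun y hy => hV ⟨hy.1.2, hy.2⟩⟩
    · have : x ∈ ⋃₀ F := by rw [hcov]; trivial
      obtain ⟨F', hF', hxF'⟩ := this
      refine ⟨F' ∩ Aᶜ, F', (hopenF _ hF').inter hA.isOpen_compl, ⟨hxF', hx⟩, hF',
        inter_subset_left, fun y hy => absurd hy.2 hy.1.2⟩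
  choose U Fm hUo hxU hFm hUF hUA using key
  obtain ⟨v, hvo, hvcov, hvlf, hvU⟩ := precise_refinement U hUo (by
    apply eq_univ_of_forall; intro x; exact mem_iUnion.mpr ⟨x, hxU x⟩)
  refine ⟨range v, fun h => if hh : ∃ x, v x = h then Fm hh.choose else ∅, ?_, ?_, ?_, ?_, ?_, ?_, ?_⟩
  · rw [sUnion_range, hvcov]
  · rintro h ⟨x, rfl⟩; exact hvo x
  · have hinj : Function.Injective (fun h : (range v : Set (Set X)) =>
        (mem_range.mp h.2).choose) := by
      intro h h' he
      have e1 : v (mem_range.mp h.2).choose = h := (mem_range.mp h.2).choose_spec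
      have e2 : v (mem_range.mp h'.2).choose = h' := (mem_range.mp h'.2).choose_spec
      ext1
      rw [← e1, ← e2]
      exact congrArg v he
    have := hvlf.comp_injective hinj
    convert this using 1
    funext h
    exact ((mem_range.mp h.2).choose_spec).symm
  · rintro h hh
    have hh' : ∃ x, v x = h := hh
    simp only [dif_pos hh']
    exact hFm _
  · rintro h hh
    have hh' : ∃ x, v x = h := hh
    simp only [dif_pos hh']
    calc h = v hh'.choose := hh'.choose_spec.symm
    _ ⊆ U hh'.choose := hvU _
    _ ⊆ Fm hh'.choose := hUF _
  · -- carrier property: each h ⊆ D h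
    intro 𝒜 h𝒜 hne hint
    obtain ⟨x, hx⟩ := hint
    refine ⟨x, ?_⟩
    simp only [mem_iInter]
    intro h hh
    have hhr : ∃ y, v y = h := h𝒜 hh
    simp only [dif_pos hhr]
    have : x ∈ h := hx h hh
    have hsub : h ⊆ Fm hhr.choose := by
      calc h = v hhr.choose := hhr.choose_spec.symm
      _ ⊆ U hhr.choose := hvU _
      _ ⊆ Fm hhr.choose := hUF _
    exact hsub this
  · intro x hx
    have : x ∈ ⋃ i, v i := by rw [hvcov]; trivial
    obtain ⟨x₀, hx₀⟩ := mem_iUnion.mp this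
    have hhr : ∃ y, v y = v x₀ := ⟨x₀, rfl⟩
    refine ⟨v x₀, mem_range_self _, hx₀, ?_⟩
    simp only [dif_pos hhr]
    have hxv : x ∈ v hhr.choose := hhr.choose_spec.symm ▸ hx₀
    exact hUA hhr.choose x ⟨hvU _ hxv, hx⟩
end
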